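/- Let W₁ and W₂ be matrices with the same number n of columns, and W = W₁ stacked over W₂ (their union). Then √svdb(W₁) + √svdb(W₂) ≥ √svdb(W), where svdb(M) = (1/n)(sum of singular values of M)². -/

import Mathlib

/-!
`tr √(WᵀW)` only depends on the Gram matrix `WᵀW = W₁ᵀW₁ + W₂ᵀW₂`, so it suffices that
`A ↦ tr √A` is subadditive on positive semidefinite matrices. For positive definite `A`, `B`
and `S = √(A + B)` we have `tr S = tr (A S⁻¹) + tr (B S⁻¹)`; the square root is operator
monotone, so `√A ≤ S`, hence `S⁻¹ ≤ (√A)⁻¹` and `tr (A S⁻¹) ≤ tr (A (√A)⁻¹) = tr √A`.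
The semidefinite case follows by perturbing with `ε • 1`, since `√(A + ε • 1) ≤ √A + √ε • 1`.
-/

open Matrix

/-- The square root of a positive semidefinite matrix, as defined in Mathlib (Dec 2024),
since removed from Mathlib. -/
noncomputable def Matrix.PosSemidef.sqrt {n : Type*} {𝕜 : Type*} [Fintype n] [RCLike 𝕜]
    [PartialOrder 𝕜]     [DecidableEq n] {A : Matrix n n 𝕜} (hA : Matrix.PosSemidef A) : Matrix n n 𝕜 :=
  hA.1.eigenvectorUnitary.1 * diagonal ((↑) ∘ (√·) ∘ hA.1.eigenvalues) *
    (star hA.1.eigenvectorUnitary : Matrix n n 𝕜)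

open scoped MatrixOrder

namespace Matrix

variable {N : Type*} [Fintype N]

lemma IsHermitian.dotProduct_mulVec_comm {D : Matrix N N ℝ} (hD : D.IsHermitian) (v w : N → ℝ) :
    v ⬝ᵥ (D *ᵥ w) = (D *ᵥ v) ⬝ᵥ w := by
  rw [dotProduct_mulVec, ← mulVec_transpose, ← conjTranspose_eq_transpose_of_trivial, hD.eq]

variable [DecidableEq N]

lemma PosSemidef.sqrt_eq_cfcSqrt {A : Matrix N N ℝ} (hA : A.PosSemidef) :
    hA.sqrt = CFC.sqrt A := by
  rw [CFC.sqrt_eq_real_sqrt A hA.nonneg, cfcₙ_eq_cfc, hA.1.cfc_eq]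
  simp [PosSemidef.sqrt, IsHermitian.cfc]

lemma le_of_mul_self_le_mul_self {X Y : Matrix N N ℝ} (hX : 0 ≤ X) (hY : 0 ≤ Y)
    (h : X * X ≤ Y * Y) : X ≤ Y := by
  have hD : (Y - X).IsHermitian := hY.posSemidef.isHermitian.sub hX.posSemidef.isHermitian
  refine hD.posSemidef_iff_eigenvalues_nonneg.2 fun i => ?_
  by_contra! hμ
  rw [Pi.zero_apply] at hμ
  set μ := hD.eigenvalues i
  set v : N → ℝ := ⇑(hD.eigenvectorBasis i)
  have hv : (Y - X) *ᵥ v = μ • v := hD.mulVec_eigenvectorBasis i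
  have hv0 : v ≠ 0 := (WithLp.ofLp_eq_zero 2).not.2 (hD.eigenvectorBasis.orthonormal.ne_zero i)
  have quad (M : Matrix N N ℝ) (hM : 0 ≤ M) : 0 ≤ v ⬝ᵥ (M *ᵥ v) := by
    simpa only [star_trivial] using hM.posSemidef.dotProduct_mulVec_nonneg v
  -- `0 ≤ vᵀ(Y² - X²)v = μ (vᵀYv + vᵀXv) ≤ 0` forces `Xv = Yv = 0`, so `μ v = 0`
  have hsplit : v ⬝ᵥ ((Y * Y - X * X) *ᵥ v) = μ * (v ⬝ᵥ (Y *ᵥ v) + v ⬝ᵥ (X *ᵥ v)) := by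
    have e : Y * Y - X * X = (Y - X) * Y + X * (Y - X) := by noncomm_ring
    rw [e, add_mulVec, ← mulVec_mulVec, ← mulVec_mulVec, dotProduct_add,
      hD.dotProduct_mulVec_comm, hv, mulVec_smul, smul_dotProduct, dotProduct_smul,
      smul_eq_mul, smul_eq_mul]
    ring
  have hYv := quad Y hY
  have hXv := quad X hX
  have hsum : v ⬝ᵥ (Y *ᵥ v) + v ⬝ᵥ (X *ᵥ v) ≤ 0 := by
    nlinarith [quad _ (sub_nonneg.2 h)]
  have hYv0 : Y *ᵥ v = 0 :=
    (hY.posSemidef.dotProduct_mulVec_zero_iff v).1 (by simp only [star_trivial]; linarith)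
  have hXv0 : X *ᵥ v = 0 :=
    (hX.posSemidef.dotProduct_mulVec_zero_iff v).1 (by simp only [star_trivial]; linarith)
  rw [sub_mulVec, hYv0, hXv0, sub_zero, eq_comm, smul_eq_zero] at hv
  exact hv.elim hμ.ne hv0

lemma inv_le_inv_of_le {A B : Matrix N N ℝ} (hA : A.PosDef) (h : A ≤ B) : B⁻¹ ≤ A⁻¹ := by
  have hB : B.PosDef := by simpa using hA.add_posSemidef (le_iff.1 h)
  refine PosSemidef.of_dotProduct_mulVec_nonneg (hA.inv.isHermitian.sub hB.inv.isHermitian)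
    fun x => ?_
  rw [star_trivial, sub_mulVec, dotProduct_sub, sub_nonneg]
  set y := B⁻¹ *ᵥ x
  set z := A⁻¹ *ᵥ x
  have hBy : B *ᵥ y = x := by
    rw [mulVec_mulVec, mul_nonsing_inv _ ((isUnit_iff_isUnit_det B).1 hB.isUnit), one_mulVec]
  have hAz : A *ᵥ z = x := by
    rw [mulVec_mulVec, mul_nonsing_inv _ ((isUnit_iff_isUnit_det A).1 hA.isUnit), one_mulVec]
  have hyAy : y ⬝ᵥ (A *ᵥ y) ≤ x ⬝ᵥ y := by
    have := (le_iff.1 h).dotProduct_mulVec_nonneg y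
    rwa [star_trivial, sub_mulVec, dotProduct_sub, sub_nonneg, hBy, dotProduct_comm y x] at this
  -- `0 ≤ (y - z)ᵀA(y - z) = yᵀAy - 2 xᵀy + xᵀz` and `yᵀAy ≤ yᵀBy = xᵀy`
  have hyz := hA.posSemidef.dotProduct_mulVec_nonneg (y - z)
  rw [star_trivial, mulVec_sub, hAz, dotProduct_sub, sub_dotProduct, sub_dotProduct,
    hA.isHermitian.dotProduct_mulVec_comm z, hAz, dotProduct_comm y x, dotProduct_comm z x] at hyz
  linarith

lemma trace_mul_nonneg {A M : Matrix N N ℝ} (hA : 0 ≤ A) (hM : 0 ≤ M) :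
    0 ≤ (A * M).trace := by
  have h := star_left_conjugate_nonneg hM (CFC.sqrt A)
  rw [(IsSelfAdjoint.of_nonneg (CFC.sqrt_nonneg A)).star_eq] at h
  rw [← CFC.sqrt_mul_sqrt_self A hA, mul_assoc, trace_mul_comm]
  exact h.posSemidef.trace_nonneg

lemma trace_mul_le_trace_mul {A X Y : Matrix N N ℝ} (hA : 0 ≤ A) (h : X ≤ Y) :
    (A * X).trace ≤ (A * Y).trace := by
  have := trace_mul_nonneg hA (sub_nonneg.2 h)
  rwa [mul_sub, trace_sub, sub_nonneg] at this

lemma cfcSqrt_le_of_le_mul_self {A Y : Matrix N N ℝ} (hA : 0 ≤ A) (hY : 0 ≤ Y)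
    (h : A ≤ Y * Y) : CFC.sqrt A ≤ Y :=
  le_of_mul_self_le_mul_self (CFC.sqrt_nonneg A) hY (by rwa [CFC.sqrt_mul_sqrt_self A hA])

lemma cfcSqrt_le_cfcSqrt {A B : Matrix N N ℝ} (hA : 0 ≤ A) (h : A ≤ B) :
    CFC.sqrt A ≤ CFC.sqrt B :=
  cfcSqrt_le_of_le_mul_self hA (CFC.sqrt_nonneg B) (by rwa [CFC.sqrt_mul_sqrt_self B (hA.trans h)])

lemma PosDef.cfcSqrt {A : Matrix N N ℝ} (hA : A.PosDef) : (CFC.sqrt A).PosDef :=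
  (IsStrictlyPositive.sqrt A hA.isStrictlyPositive).posDef

lemma PosDef.mul_inv_cfcSqrt {A : Matrix N N ℝ} (hA : A.PosDef) :
    A * (CFC.sqrt A)⁻¹ = CFC.sqrt A := by
  calc A * (CFC.sqrt A)⁻¹ = CFC.sqrt A * CFC.sqrt A * (CFC.sqrt A)⁻¹ := by
        rw [CFC.sqrt_mul_sqrt_self A hA.posSemidef.nonneg]
    _ = CFC.sqrt A :=
        mul_nonsing_inv_cancel_right _ _ ((isUnit_iff_isUnit_det _).1 hA.cfcSqrt.isUnit)

lemma trace_mul_inv_cfcSqrt_le {M C : Matrix N N ℝ} (hM : M.PosDef) (h : M ≤ C) :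
    (M * (CFC.sqrt C)⁻¹).trace ≤ (CFC.sqrt M).trace := by
  calc (M * (CFC.sqrt C)⁻¹).trace ≤ (M * (CFC.sqrt M)⁻¹).trace :=
        trace_mul_le_trace_mul hM.posSemidef.nonneg
          (inv_le_inv_of_le hM.cfcSqrt (cfcSqrt_le_cfcSqrt hM.posSemidef.nonneg h))
    _ = (CFC.sqrt M).trace := by rw [hM.mul_inv_cfcSqrt]

lemma trace_cfcSqrt_add_le_of_posDef {A B : Matrix N N ℝ} (hA : A.PosDef) (hB : B.PosDef) :
    (CFC.sqrt (A + B)).trace ≤ (CFC.sqrt A).trace + (CFC.sqrt B).trace := by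
  have hsplit : (CFC.sqrt (A + B)).trace
      = (A * (CFC.sqrt (A + B))⁻¹).trace + (B * (CFC.sqrt (A + B))⁻¹).trace := by
    rw [← trace_add, ← add_mul, (hA.add hB).mul_inv_cfcSqrt]
  have hAC := trace_mul_inv_cfcSqrt_le hA (le_add_of_nonneg_right hB.posSemidef.nonneg)
  have hBC := trace_mul_inv_cfcSqrt_le hB (le_add_of_nonneg_left hA.posSemidef.nonneg)
  linarith

lemma trace_cfcSqrt_add_smul_one_le {A : Matrix N N ℝ} (hA : 0 ≤ A) {ε : ℝ} (hε : 0 ≤ ε) :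
    (CFC.sqrt (A + ε • 1)).trace ≤ (CFC.sqrt A).trace + Fintype.card N * √ε := by
  obtain ⟨r, hr, rfl⟩ : ∃ r ≥ 0, ε = r ^ 2 := ⟨√ε, Real.sqrt_nonneg ε, (Real.sq_sqrt hε).symm⟩
  rw [Real.sqrt_sq hr]
  set Y := CFC.sqrt A + r • (1 : Matrix N N ℝ)
  have hY : 0 ≤ Y := add_nonneg (CFC.sqrt_nonneg A) (smul_nonneg hr zero_le_one)
  have hYY : Y * Y = A + r ^ 2 • 1 + (2 * r) • CFC.sqrt A := by
    simp only [Y, add_mul, mul_add, mul_one, one_mul, smul_mul_assoc, mul_smul_comm,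
      CFC.sqrt_mul_sqrt_self A hA]
    module
  have hle : A + r ^ 2 • 1 ≤ Y * Y := by
    rw [hYY]
    exact le_add_of_nonneg_right (smul_nonneg (by positivity) (CFC.sqrt_nonneg A))
  calc (CFC.sqrt (A + r ^ 2 • 1)).trace ≤ Y.trace :=
        (tracePositiveLinearMap N ℝ ℝ).monotone
          (cfcSqrt_le_of_le_mul_self (add_nonneg hA (smul_nonneg (sq_nonneg r) zero_le_one))
            hY hle)
    _ = (CFC.sqrt A).trace + Fintype.card N * r := by
        rw [trace_add, trace_smul, trace_one, smul_eq_mul, mul_comm]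

lemma trace_cfcSqrt_add_le {A B : Matrix N N ℝ} (hA : 0 ≤ A) (hB : 0 ≤ B) :
    (CFC.sqrt (A + B)).trace ≤ (CFC.sqrt A).trace + (CFC.sqrt B).trace := by
  set c : ℝ := (Fintype.card N : ℝ)
  refine le_of_forall_pos_lt_add fun δ hδ => ?_
  obtain ⟨ε, hε, hεδ⟩ : ∃ ε > 0, 2 * (c * √ε) < δ := by
    have hc : 0 < 2 * c + 1 := by positivity
    refine ⟨(δ / (2 * c + 1)) ^ 2, by positivity, ?_⟩
    rw [Real.sqrt_sq (by positivity), mul_div_assoc', mul_div_assoc', div_lt_iff₀ hc]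
    nlinarith
  have hεI : (0 : Matrix N N ℝ) ≤ ε • 1 := smul_nonneg hε.le zero_le_one
  calc (CFC.sqrt (A + B)).trace ≤ (CFC.sqrt ((A + ε • 1) + (B + ε • 1))).trace := by
        refine (tracePositiveLinearMap N ℝ ℝ).monotone (cfcSqrt_le_cfcSqrt (add_nonneg hA hB) ?_)
        rw [add_add_add_comm]
        exact le_add_of_nonneg_right (add_nonneg hεI hεI)
    _ ≤ (CFC.sqrt (A + ε • 1)).trace + (CFC.sqrt (B + ε • 1)).trace :=
        trace_cfcSqrt_add_le_of_posDef (.posSemidef_add hA.posSemidef (.smul .one hε))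
          (.posSemidef_add hB.posSemidef (.smul .one hε))
    _ ≤ ((CFC.sqrt A).trace + c * √ε) + ((CFC.sqrt B).trace + c * √ε) :=
        add_le_add (trace_cfcSqrt_add_smul_one_le hA hε.le)
          (trace_cfcSqrt_add_smul_one_le hB hε.le)
    _ < (CFC.sqrt A).trace + (CFC.sqrt B).trace + δ := by linarith

end Matrix

/-- With `svdb(M) = (1/n)·(trace √(MᵀM))²`, for the stacked workload `W = [W₁; W₂]` (union):
`√svdb(W₁) + √svdb(W₂) ≥ √svdb(W)`. -/
theorem sqrt_svdb_union_le {m₁ m₂ n : ℕ}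
    (W₁ : Matrix (Fin m₁) (Fin n) ℝ) (W₂ : Matrix (Fin m₂) (Fin n) ℝ)
    (h₁ : (W₁ᵀ * W₁).PosSemidef) (h₂ : (W₂ᵀ * W₂).PosSemidef)
    (hW : (((Matrix.fromRows W₁ W₂))ᵀ * (Matrix.fromRows W₁ W₂)).PosSemidef) :
    Real.sqrt ((1 / (n : ℝ)) * hW.sqrt.trace ^ 2)
      ≤ Real.sqrt ((1 / (n : ℝ)) * h₁.sqrt.trace ^ 2)
        + Real.sqrt ((1 / (n : ℝ)) * h₂.sqrt.trace ^ 2) := by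
  have hgram : (fromRows W₁ W₂)ᵀ * fromRows W₁ W₂ = W₁ᵀ * W₁ + W₂ᵀ * W₂ := by
    rw [transpose_fromRows, fromCols_mul_fromRows]
  have htrace : hW.sqrt.trace ≤ h₁.sqrt.trace + h₂.sqrt.trace := by
    rw [hW.sqrt_eq_cfcSqrt, h₁.sqrt_eq_cfcSqrt, h₂.sqrt_eq_cfcSqrt, hgram]
    exact trace_cfcSqrt_add_le h₁.nonneg h₂.nonneg
  have hnonneg {M : Matrix (Fin n) (Fin n) ℝ} (hM : M.PosSemidef) : 0 ≤ hM.sqrt.trace := by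
    rw [hM.sqrt_eq_cfcSqrt]
    exact (CFC.sqrt_nonneg M).posSemidef.trace_nonneg
  have hn : (0 : ℝ) ≤ 1 / n := by positivity
  simp only [Real.sqrt_mul hn, Real.sqrt_sq (hnonneg _), ← mul_add]
  exact mul_le_mul_of_nonneg_left htrace (Real.sqrt_nonneg _)
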